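/- Let H be a weak Hopf quasigroup and G a group acting on H by weak Hopf quasigroup endomorphisms. Then H^G = (H_p)_{p∈G}, where each H_p is a copy of H (via identification i_p: H ≅ H_p), with Δ_{p,q}(i_{pq}(h)) = i_p(h₁) ⊗ i_q(h₂), ε(i_e(h)) = ε(h), S_p(i_p(h)) = i_{p⁻¹}(S(h)), and crossing π_p(i_q(h)) = i_{pqp⁻¹}(p·h), is a crossed group-cograded weak Hopf quasigroup. -/

import Mathlib

noncomputable section

open TensorProduct

namespace WHQPaper

variable (k : Type*) [Field k]

/-- `(a ⊗ b) ↦ f a * g b` into the scalars. -/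
def sc2 {M N : Type*} [AddCommGroup M] [Module k M] [AddCommGroup N] [Module k N]
    (f : M →ₗ[k] k) (g : N →ₗ[k] k) : M ⊗[k] N →ₗ[k] k :=
  (LinearMap.mul' k k).comp (TensorProduct.map f g)

/-- `(a ⊗ b) ↦ f a • g b`. -/
def sm2 {M N P : Type*} [AddCommGroup M] [Module k M] [AddCommGroup N] [Module k N]
    [AddCommGroup P] [Module k P] (f : M →ₗ[k] k) (g : N →ₗ[k] P) : M ⊗[k] N →ₗ[k] P :=
  TensorProduct.lift ((LinearMap.lsmul k P).compl₁₂ f g)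

/-- `(a ⊗ b) ↦ m (f a) (g b)`. -/
def mu2 {M N A B C : Type*} [AddCommGroup M] [Module k M] [AddCommGroup N] [Module k N]
    [AddCommGroup A] [Module k A] [AddCommGroup B] [Module k B] [AddCommGroup C] [Module k C]
    (m : A →ₗ[k] B →ₗ[k] C) (f : M →ₗ[k] A) (g : N →ₗ[k] B) : M ⊗[k] N →ₗ[k] C :=
  TensorProduct.lift (m.compl₁₂ f g)

/-- the bilinear map `(a ⊗ b) ↦ (c ⊗ d) ↦ (f a c) ⊗ (g b d)`. -/
def pair2 {A B C D E₁ E₂ : Type*} [AddCommGroup A] [Module k A] [AddCommGroup B] [Module k B]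
    [AddCommGroup C] [Module k C] [AddCommGroup D] [Module k D]
    [AddCommGroup E₁] [Module k E₁] [AddCommGroup E₂] [Module k E₂]
    (f : A →ₗ[k] C →ₗ[k] E₁) (g : B →ₗ[k] D →ₗ[k] E₂) :
    (A ⊗[k] B) →ₗ[k] (C ⊗[k] D) →ₗ[k] (E₁ ⊗[k] E₂) :=
  TensorProduct.lift ((TensorProduct.mapBilinear (σ₁₂ := RingHom.id k) (M := C) (N := D) (M₂ := E₁) (N₂ := E₂)).compl₁₂ f g)

variable {G : Type*} [Group G]

/-- transport along an equality of indices. -/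
def castH (H : G → Type*) [∀ p, AddCommGroup (H p)] [∀ p, Module k (H p)]
    {p q : G} (e : p = q) : H p →ₗ[k] H q where
  toFun x := e ▸ x
  map_add' := by subst e; intros; rfl
  map_smul' := by subst e; intros; rfl

variable (G)

/-- A group-cograded weak Hopf quasigroup: a family of (not necessarily associative)
unital algebras `(H_p)_{p ∈ G}`, comultiplications `Δ_{p,q} : H_{pq} → H_p ⊗ H_q` which are
coassociative algebra maps, a counit `ε : H_e → k` and an antipode
`S = (S_p : H_p → H_{p⁻¹})`, subject to the axioms of Definition 3.1, together with the
four (co)unital maps `ε^t_p, ε^s_p, ε̃^t_p, ε̃^s_p : H_e → H_p` given by their defining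
formulas. -/
structure GCWHQ (H : G → Type*) [∀ p, AddCommGroup (H p)] [∀ p, Module k (H p)] where
  mul : ∀ p, H p →ₗ[k] H p →ₗ[k] H p
  one : ∀ p, H p
  comul : ∀ p q, H (p * q) →ₗ[k] H p ⊗[k] H q
  counit : H 1 →ₗ[k] k
  antS : ∀ p, H p →ₗ[k] H p⁻¹
  εt : ∀ p, H 1 →ₗ[k] H p
  εs : ∀ p, H 1 →ₗ[k] H p
  εt' : ∀ p, H 1 →ₗ[k] H p
  εs' : ∀ p, H 1 →ₗ[k] H p
  one_mul' : ∀ p (h : H p), mul p (one p) h = h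
  mul_one' : ∀ p (h : H p), mul p h (one p) = h
  /-- each `Δ_{p,q}` is multiplicative -/
  comul_mul : ∀ p q (h g : H (p * q)),
    comul p q (mul (p * q) h g) = pair2 k (mul p) (mul q) (comul p q h) (comul p q g)
  coassoc : ∀ p q r (h : H (p * q * r)),
    (TensorProduct.assoc k (H p) (H q) (H r))
        ((TensorProduct.map (comul p q) LinearMap.id) (comul (p * q) r h))
      = (TensorProduct.map LinearMap.id (comul q r))
          (comul p (q * r) (castH k H (mul_assoc p q r) h))
  counit_left : ∀ p (h : H p),
    (TensorProduct.lid k (H p)) ((TensorProduct.map counit LinearMap.id)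
      (comul 1 p (castH k H (one_mul p).symm h))) = h
  counit_right : ∀ p (h : H p),
    (TensorProduct.rid k (H p)) ((TensorProduct.map LinearMap.id counit)
      (comul p 1 (castH k H (mul_one p).symm h))) = h
  eps_assoc : ∀ g h l : H 1, counit (mul 1 (mul 1 g h) l) = counit (mul 1 g (mul 1 h l))
  /-- `ε(ghl) = ε(gh₁)ε(h₂l)` -/
  eps_weak₁ : ∀ g h l : H 1, counit (mul 1 (mul 1 g h) l)
    = sc2 k (counit ∘ₗ mul 1 g) (counit ∘ₗ (mul 1).flip l)
        (comul 1 1 (castH k H (one_mul (1 : G)).symm h))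
  /-- `ε(ghl) = ε(gh₂)ε(h₁l)` -/
  eps_weak₂ : ∀ g h l : H 1, counit (mul 1 (mul 1 g h) l)
    = sc2 k (counit ∘ₗ (mul 1).flip l) (counit ∘ₗ mul 1 g)
        (comul 1 1 (castH k H (one_mul (1 : G)).symm h))
  /-- (3.1): `(Δ_{p,q} ⊗ id)Δ_{pq,r}(1) = (Δ_{p,q}(1) ⊗ 1_r)(1_p ⊗ Δ_{q,r}(1))` -/
  unit_weak₁ : ∀ p q r, (TensorProduct.map (comul p q) LinearMap.id)
      (comul (p * q) r (one (p * q * r)))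
    = pair2 k (pair2 k (mul p) (mul q)) (mul r)
        ((comul p q (one (p * q))) ⊗ₜ[k] (one r))
        ((TensorProduct.assoc k (H p) (H q) (H r)).symm
          ((one p) ⊗ₜ[k] (comul q r (one (q * r)))))
  /-- (3.2): `(Δ_{p,q} ⊗ id)Δ_{pq,r}(1) = (1_p ⊗ Δ_{q,r}(1))(Δ_{p,q}(1) ⊗ 1_r)` -/
  unit_weak₂ : ∀ p q r, (TensorProduct.map (comul p q) LinearMap.id)
      (comul (p * q) r (one (p * q * r)))
    = pair2 k (pair2 k (mul p) (mul q)) (mul r)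
        ((TensorProduct.assoc k (H p) (H q) (H r)).symm
          ((one p) ⊗ₜ[k] (comul q r (one (q * r)))))
        ((comul p q (one (p * q))) ⊗ₜ[k] (one r))
  /-- (3.4): `ε^t_p(h) = ε(1_{(1,e)}h) 1_{(2,p)}` -/
  εt_def : ∀ p (h : H 1), εt p h
    = sm2 k (counit ∘ₗ (mul 1).flip h) LinearMap.id (comul 1 p (one (1 * p)))
  /-- (3.5): `ε^s_p(h) = 1_{(1,p)} ε(h1_{(2,e)})` -/
  εs_def : ∀ p (h : H 1), εs p h
    = sm2 k (counit ∘ₗ mul 1 h) LinearMap.id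
        ((TensorProduct.comm k (H p) (H 1)) (comul p 1 (one (p * 1))))
  /-- (3.11): `ε̃^t_p(h) = 1_{(1,p)} ε(1_{(2,e)}h)` -/
  εt'_def : ∀ p (h : H 1), εt' p h
    = sm2 k (counit ∘ₗ (mul 1).flip h) LinearMap.id
        ((TensorProduct.comm k (H p) (H 1)) (comul p 1 (one (p * 1))))
  /-- (3.12): `ε̃^s_p(h) = ε(h1_{(1,e)}) 1_{(2,p)}` -/
  εs'_def : ∀ p (h : H 1), εs' p h
    = sm2 k (counit ∘ₗ mul 1 h) LinearMap.id (comul 1 p (one (1 * p)))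
  /-- (3.6): `S = S * ε_t` -/
  S_conv_εt : ∀ p (h : H p),
    mu2 k (mul p⁻¹) (antS p) (εt p⁻¹) (comul p 1 (castH k H (mul_one p).symm h)) = antS p h
  /-- (3.6): `S = ε_s * S` -/
  εs_conv_S : ∀ p (h : H p),
    mu2 k (mul p⁻¹) (εs p⁻¹) (antS p) (comul 1 p (castH k H (one_mul p).symm h)) = antS p h
  /-- (3.7): `S(h_{(1,p⁻¹)})(h_{(2,p)}g) = ε^s_p(h)g` -/
  antip₁ : ∀ p (h : H 1) (g : H p),
    mu2 k (mul p) ((castH k H (inv_inv p)) ∘ₗ antS p⁻¹) ((mul p).flip g)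
        (comul p⁻¹ p (castH k H (inv_mul_cancel p).symm h))
      = mul p (εs p h) g
  /-- (3.8): `h_{(1,p)}(S(h_{(2,p⁻¹)})g) = ε^t_p(h)g` -/
  antip₂ : ∀ p (h : H 1) (g : H p),
    mu2 k (mul p) LinearMap.id (((mul p).flip g) ∘ₗ (castH k H (inv_inv p)) ∘ₗ antS p⁻¹)
        (comul p p⁻¹ (castH k H (mul_inv_cancel p).symm h))
      = mul p (εt p h) g
  /-- (3.9): `(gh_{(1,p)})S(h_{(2,p⁻¹)}) = gε^t_p(h)` -/
  antip₃ : ∀ p (h : H 1) (g : H p),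
    mu2 k (mul p) (mul p g) ((castH k H (inv_inv p)) ∘ₗ antS p⁻¹)
        (comul p p⁻¹ (castH k H (mul_inv_cancel p).symm h))
      = mul p g (εt p h)
  /-- (3.10): `(gS(h_{(1,p⁻¹)}))h_{(2,p)} = gε^s_p(h)` -/
  antip₄ : ∀ p (h : H 1) (g : H p),
    mu2 k (mul p) ((mul p g) ∘ₗ (castH k H (inv_inv p)) ∘ₗ antS p⁻¹) LinearMap.id
        (comul p⁻¹ p (castH k H (inv_mul_cancel p).symm h))
      = mul p g (εs p h)

end WHQPaper

namespace WHQPaper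

variable {k G : Type*} [Field k] [Group G] {H : G → Type*}
  [∀ p, AddCommGroup (H p)] [∀ p, Module k (H p)]

/-- A crossing on a group-cograded weak Hopf quasigroup: a family of algebra
isomorphisms `π_p : H_q → H_{pqp⁻¹}` compatible with comultiplication and counit,
with `π_{pq} = π_p π_q`. -/
structure Crossing (A : GCWHQ k G H) where
  π : ∀ p q, H q →ₗ[k] H (p * q * p⁻¹)
  bijective : ∀ p q, Function.Bijective (π p q)
  map_mul' : ∀ p q (h g : H q), π p q (A.mul q h g) = A.mul (p * q * p⁻¹) (π p q h) (π p q g)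
  map_one' : ∀ p q, π p q (A.one q) = A.one (p * q * p⁻¹)
  comul_comp : ∀ p q r (h : H (q * r)),
    (TensorProduct.map (π p q) (π p r)) (A.comul q r h)
      = A.comul (p * q * p⁻¹) (p * r * p⁻¹)
          (castH k H (by group : p * (q * r) * p⁻¹ = (p * q * p⁻¹) * (p * r * p⁻¹)) (π p (q * r) h))
  counit_comp : ∀ (p : G) (h : H 1),
    A.counit (castH k H (by group : p * 1 * p⁻¹ = 1) (π p 1 h)) = A.counit h
  comp' : ∀ p q r (h : H r),
    π (p * q) r h
      = castH k H (by group : p * (q * r * q⁻¹) * p⁻¹ = (p * q) * r * (p * q)⁻¹)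
          (π p (q * r * q⁻¹) (π q r h))

end WHQPaper

namespace WHQPaper

variable (k : Type*) [Field k]

variable {H : Type*} [AddCommGroup H] [Module k H]

/-- A weak Hopf quasigroup without its antipode: a unital (not necessarily associative)
magma and a comonoid subject to the compatibility axioms (1)-(3) of
Alvarez-Fernandez-Gonzalez. -/
structure WHQpre (H : Type*) [AddCommGroup H] [Module k H] where
  mul : H →ₗ[k] H →ₗ[k] H
  one : H
  comul : H →ₗ[k] H ⊗[k] H
  counit : H →ₗ[k] k
  one_mul' : ∀ h, mul one h = h
  mul_one' : ∀ h, mul h one = h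
  coassoc : ∀ h, (TensorProduct.assoc k H H H)
      ((TensorProduct.map comul LinearMap.id) (comul h))
    = (TensorProduct.map LinearMap.id comul) (comul h)
  counit_left : ∀ h, (TensorProduct.lid k H)
      ((TensorProduct.map counit LinearMap.id) (comul h)) = h
  counit_right : ∀ h, (TensorProduct.rid k H)
      ((TensorProduct.map LinearMap.id counit) (comul h)) = h
  /-- (1): `δ(hg) = h₁g₁ ⊗ h₂g₂` -/
  comul_mul : ∀ h g, comul (mul h g) = pair2 k mul mul (comul h) (comul g)
  /-- (2): `ε((hg)l) = ε(h(gl))` -/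
  eps_assoc : ∀ h g l, counit (mul (mul h g) l) = counit (mul h (mul g l))
  /-- (2): `ε((hg)l) = ε(hg₁)ε(g₂l)` -/
  eps_weak₁ : ∀ h g l, counit (mul (mul h g) l)
    = sc2 k (counit ∘ₗ mul h) (counit ∘ₗ mul.flip l) (comul g)
  /-- (2): `ε((hg)l) = ε(hg₂)ε(g₁l)` -/
  eps_weak₂ : ∀ h g l, counit (mul (mul h g) l)
    = sc2 k (counit ∘ₗ mul.flip l) (counit ∘ₗ mul h) (comul g)
  /-- (3): `1₁ ⊗ 1₂ ⊗ 1₃ = 1₁ ⊗ 1₂1'₁ ⊗ 1'₂` -/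
  unit_weak₁ : (TensorProduct.map comul LinearMap.id) (comul one)
    = pair2 k (pair2 k mul mul) mul ((comul one) ⊗ₜ[k] one)
        ((TensorProduct.assoc k H H H).symm (one ⊗ₜ[k] comul one))
  /-- (3): `1₁ ⊗ 1₂ ⊗ 1₃ = 1₁ ⊗ 1'₁1₂ ⊗ 1'₂` -/
  unit_weak₂ : (TensorProduct.map comul LinearMap.id) (comul one)
    = pair2 k (pair2 k mul mul) mul
        ((TensorProduct.assoc k H H H).symm (one ⊗ₜ[k] comul one)) ((comul one) ⊗ₜ[k] one)

variable {k}

/-- convolution product of linear endomorphisms: `(f * g)(h) = f(h₁)g(h₂)`. -/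
def WHQpre.conv (A : WHQpre k H) (f g : H →ₗ[k] H) : H →ₗ[k] H :=
  (mu2 k A.mul f g).comp A.comul

/-- The axioms (4) for an antipode `S` of a weak Hopf quasigroup, with target morphism
`εt = id * S` and source morphism `εs = S * id`. -/
structure WHQpre.IsAntipode (A : WHQpre k H) (S εt εs : H →ₗ[k] H) : Prop where
  /-- `ε_t = id_H * S` -/
  εt_eq : εt = A.conv LinearMap.id S
  /-- `ε_s = S * id_H` -/
  εs_eq : εs = A.conv S LinearMap.id
  /-- (4-1): `ε_t(h) = ε(1₁h)1₂` -/
  εt_def : ∀ h, εt h = sm2 k (A.counit ∘ₗ A.mul.flip h) LinearMap.id (A.comul A.one)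
  /-- (4-2): `ε_s(h) = 1₁ε(h1₂)` -/
  εs_def : ∀ h, εs h = sm2 k (A.counit ∘ₗ A.mul h) LinearMap.id
      ((TensorProduct.comm k H H) (A.comul A.one))
  /-- (4-3): `S = S * ε_t` -/
  S_conv_εt : A.conv S εt = S
  /-- (4-3): `S = ε_s * S` -/
  εs_conv_S : A.conv εs S = S
  /-- (4-4): `S(h₁)(h₂g) = ε_s(h)g` -/
  ax44 : ∀ h g, mu2 k A.mul S (A.mul.flip g) (A.comul h) = A.mul (εs h) g
  /-- (4-5): `h₁(S(h₂)g) = ε_t(h)g` -/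
  ax45 : ∀ h g, mu2 k A.mul LinearMap.id ((A.mul.flip g) ∘ₗ S) (A.comul h) = A.mul (εt h) g
  /-- (4-6): `(hg₁)S(g₂) = hε_t(g)` -/
  ax46 : ∀ h g, mu2 k A.mul (A.mul h) S (A.comul g) = A.mul h (εt g)
  /-- (4-7): `(hS(g₁))g₂ = hε_s(g)` -/
  ax47 : ∀ h g, mu2 k A.mul ((A.mul h) ∘ₗ S) LinearMap.id (A.comul g) = A.mul h (εs g)

variable (k)

/-- A weak Hopf quasigroup. -/
structure WHQ (H : Type*) [AddCommGroup H] [Module k H] extends WHQpre k H where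
  S : H →ₗ[k] H
  εt : H →ₗ[k] H
  εs : H →ₗ[k] H
  antipode : toWHQpre.IsAntipode S εt εs

end WHQPaper

/-
`H^G` is the constant family `H_p = H`, all of whose structure maps are those of `H`: every
axiom of a group-cograded weak Hopf quasigroup is then literally an axiom of `H`, once the
transports `castH` between the (equal) fibres are seen to be identities. The crossing is
the action itself; each `π_p` is invertible with inverse `π_{p⁻¹}`, and its compatibilities
with the structure are exactly the hypotheses on the action.
-/

namespace WHQPaper

variable {k G H₀ : Type*} [Field k] [AddCommGroup H₀] [Module k H₀]

@[simp] lemma castH_const {p q : G} (e : p = q) :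
    castH k (fun _ : G => H₀) e = LinearMap.id := by
  subst e; rfl

section sm2

variable {M N P : Type*} [AddCommGroup M] [Module k M] [AddCommGroup N] [Module k N]
  [AddCommGroup P] [Module k P]

lemma sm2_tmul (f : M →ₗ[k] k) (g : N →ₗ[k] P) (a : M) (b : N) :
    sm2 k f g (a ⊗ₜ[k] b) = f a • g b := by
  simp [sm2]

def sm2ₗ (g : N →ₗ[k] P) : (M →ₗ[k] k) →ₗ[k] M ⊗[k] N →ₗ[k] P where
  toFun f := sm2 k f g
  map_add' f₁ f₂ := TensorProduct.ext' fun a b => by simp [sm2_tmul, add_smul]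
  map_smul' c f := TensorProduct.ext' fun a b => by simp [sm2_tmul, smul_smul]

end sm2

namespace WHQpre

variable (A : WHQpre k H₀)

/-- `ε̃_t(h) = 1₁ ε(1₂h)`, the map (3.11) for a single weak Hopf quasigroup. -/
def εt' : H₀ →ₗ[k] H₀ :=
  LinearMap.applyₗ ((TensorProduct.comm k H₀ H₀) (A.comul A.one)) ∘ₗ sm2ₗ LinearMap.id ∘ₗ
    LinearMap.llcomp k H₀ H₀ k A.counit ∘ₗ A.mul.flip

/-- `ε̃_s(h) = ε(h1₁) 1₂`, the map (3.12) for a single weak Hopf quasigroup. -/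
def εs' : H₀ →ₗ[k] H₀ :=
  LinearMap.applyₗ (A.comul A.one) ∘ₗ sm2ₗ LinearMap.id ∘ₗ
    LinearMap.llcomp k H₀ H₀ k A.counit ∘ₗ A.mul

lemma conv_apply (f g : H₀ →ₗ[k] H₀) (h : H₀) : A.conv f g h = mu2 k A.mul f g (A.comul h) :=
  rfl

end WHQpre

variable [Group G]

variable (G) in
/-- The group-cograded weak Hopf quasigroup `H^G`. -/
def WHQ.toConstGCWHQ (A : WHQ k H₀) : GCWHQ k G (fun _ => H₀) where
  mul _ := A.mul
  one _ := A.one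
  comul _ _ := A.comul
  counit := A.counit
  antS _ := A.S
  εt _ := A.εt
  εs _ := A.εs
  εt' _ := A.εt'
  εs' _ := A.εs'
  one_mul' _ := A.one_mul'
  mul_one' _ := A.mul_one'
  comul_mul _ _ := A.comul_mul
  coassoc _ _ _ h := by simpa using A.coassoc h
  counit_left _ h := by simpa using A.counit_left h
  counit_right _ h := by simpa using A.counit_right h
  eps_assoc := A.eps_assoc
  eps_weak₁ g h l := by simpa using A.eps_weak₁ g h l
  eps_weak₂ g h l := by simpa using A.eps_weak₂ g h l
  unit_weak₁ _ _ _ := A.unit_weak₁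
  unit_weak₂ _ _ _ := A.unit_weak₂
  εt_def _ := A.antipode.εt_def
  εs_def _ := A.antipode.εs_def
  εt'_def _ _ := rfl
  εs'_def _ _ := rfl
  S_conv_εt _ h := by simpa [WHQpre.conv_apply] using LinearMap.congr_fun A.antipode.S_conv_εt h
  εs_conv_S _ h := by simpa [WHQpre.conv_apply] using LinearMap.congr_fun A.antipode.εs_conv_S h
  antip₁ _ h g := by simpa using A.antipode.ax44 h g
  antip₂ _ h g := by simpa using A.antipode.ax45 h g
  antip₃ _ h g := by simpa using A.antipode.ax46 g h
  antip₄ _ h g := by simpa using A.antipode.ax47 g h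

def WHQ.crossingOfAction (A : WHQ k H₀) (ρ : G →* Module.End k H₀)
    (hmul : ∀ p h g, ρ p (A.mul h g) = A.mul (ρ p h) (ρ p g))
    (hone : ∀ p, ρ p A.one = A.one)
    (hcomul : ∀ p, A.comul ∘ₗ ρ p = TensorProduct.map (ρ p) (ρ p) ∘ₗ A.comul)
    (hcounit : ∀ p, A.counit ∘ₗ ρ p = A.counit) :
    Crossing (A.toConstGCWHQ G) where
  π p _ := ρ p
  bijective p _ := Module.End.isUnit_iff _ |>.mp ((Group.isUnit p).map ρ)
  map_mul' p _ := hmul p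
  map_one' p _ := hone p
  comul_comp p _ _ h := by
    simpa [WHQ.toConstGCWHQ] using (LinearMap.congr_fun (hcomul p) h).symm
  counit_comp p h := by simpa [WHQ.toConstGCWHQ] using LinearMap.congr_fun (hcounit p) h
  comp' p q _ h := by simp [map_mul ρ p q, Module.End.mul_apply]

end WHQPaper

open WHQPaper in
theorem HG_crossed_GCWHQ_general {k G H₀ : Type*} [Field k] [Group G]
    [AddCommGroup H₀] [Module k H₀] (A : WHQ k H₀)
    (act : G → (H₀ →ₗ[k] H₀))
    (act_one : act 1 = LinearMap.id)
    (act_mul : ∀ p q, act (p * q) = act p ∘ₗ act q)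
    (act_mul' : ∀ p (h g : H₀), act p (A.mul h g) = A.mul (act p h) (act p g))
    (act_unit : ∀ p, act p A.one = A.one)
    (act_comul : ∀ p, A.comul ∘ₗ act p = TensorProduct.map (act p) (act p) ∘ₗ A.comul)
    (act_counit : ∀ p, A.counit ∘ₗ act p = A.counit) :
    ∃ (B : GCWHQ k G (fun _ => H₀)) (c : Crossing B),
      (∀ p, B.mul p = A.mul) ∧
      (∀ p, B.one p = A.one) ∧
      (∀ p q, B.comul p q = A.comul) ∧
      (B.counit = A.counit) ∧
      (∀ p, B.antS p = A.S) ∧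
      (∀ p q, c.π p q = act p) := by
  let ρ : G →* Module.End k H₀ := { toFun := act, map_one' := act_one, map_mul' := act_mul }
  exact ⟨A.toConstGCWHQ G, A.crossingOfAction ρ act_mul' act_unit act_comul act_counit,
    fun _ => rfl, fun _ => rfl, fun _ _ => rfl, rfl, fun _ => rfl, fun _ _ => rfl⟩

open WHQPaper in
/-- Let `H` be a weak Hopf quasigroup and `G` a group acting on `H` by weak Hopf
quasigroup endomorphisms.  Then `H^G = (H_p)_{p∈G}`, where each `H_p` is a copy of `H`,
with `Δ_{p,q}(h) = h₁ ⊗ h₂`, `ε`, `S_p = S` and crossing `π_p(h) = p·h`, is a crossed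
group-cograded weak Hopf quasigroup. -/
theorem HG_crossed_GCWHQ {k G H₀ : Type*} [Field k] [Group G]
    [AddCommGroup H₀] [Module k H₀] (A : WHQ k H₀)
    (act : G → (H₀ →ₗ[k] H₀))
    (act_one : act 1 = LinearMap.id)
    (act_mul : ∀ p q, act (p * q) = act p ∘ₗ act q)
    (act_mul' : ∀ p (h g : H₀), act p (A.mul h g) = A.mul (act p h) (act p g))
    (act_unit : ∀ p, act p A.one = A.one)
    (act_comul : ∀ p, A.comul ∘ₗ act p = TensorProduct.map (act p) (act p) ∘ₗ A.comul)
    (act_counit : ∀ p, A.counit ∘ₗ act p = A.counit)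
    (act_antS : ∀ p, A.S ∘ₗ act p = act p ∘ₗ A.S) :
    ∃ (B : GCWHQ k G (fun _ => H₀)) (c : Crossing B),
      (∀ p, B.mul p = A.mul) ∧
      (∀ p, B.one p = A.one) ∧
      (∀ p q, B.comul p q = A.comul) ∧
      (B.counit = A.counit) ∧
      (∀ p, B.antS p = A.S) ∧
      (∀ p q, c.π p q = act p) :=
  HG_crossed_GCWHQ_general A act act_one act_mul act_mul' act_unit act_comul act_counit
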